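/- arXiv:2405.00474 — 4 statements merged into one kernel-verified Lean document; each statement's English description precedes it below -/
import Mathlib

section
/- Let f(r) = -∫ log(∫ exp(-βρ(x,y)) dr(y)) dp(x) where p is a probability measure supported in [-M,M]^d. Suppose the optimal r* over all probability measures on ℝ^d is supported in [-M,M]^d, and exp(-βρ(x,·)) is L-Lipschitz on [-M,M]^d uniformly in x ∈ [-M,M]^d with uniform lower bound ∫ exp(-βρ(x,y)) dμ(y) ≥ δ₀ for μ ∈ {qⁿ, r*}. Then the optimal values f(rⁿ) of the problems restricted to discrete measures supported on the n-point uniform grid of [-M,M]^d satisfy 0 ≤ f(rⁿ) - f(r*) ≤ Lh/(2δ₀), where h = 2M/n^{1/d}. -/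
/-!
By the two optimality properties, `f(r*) ≤ f(rⁿ) ≤ f(qⁿ)`, where `qⁿ` moves the `r*`-mass of each
cell `I_j` to its grid point `y_j`. On each cell `exp (-β ρ (x, ·))` varies by at most `L h / 2`,
so for `x` in the cube the inner integrals `a = ∫ … dr*` and `b = ∫ … dqⁿ` satisfy
`|b - a| ≤ L h / 2`, whence `log a - log b ≤ (a - b) / b ≤ L h / (2 δ₀)`; integrating over `p`
gives `f(qⁿ) - f(r*) ≤ L h / (2 δ₀)`.
-/

open MeasureTheory

/-- The RD objective `f(r) = -∫ log (∫ exp (-β ρ (x,y)) dr(y)) dp(x)`. -/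
noncomputable def RDobjective {d : ℕ} (ρ : ((Fin d → ℝ) × (Fin d → ℝ)) → ℝ) (β : ℝ)
    (p : Measure (Fin d → ℝ)) (r : Measure (Fin d → ℝ)) : ℝ :=
  -∫ x, Real.log (∫ z, Real.exp (-β * ρ (x, z)) ∂r) ∂p

open Set

section CellMassDiscretization

variable {α ι : Type*} [MeasurableSpace α] [Fintype ι] {μ : Measure α} {I : ι → Set α}
  {y : ι → α}

noncomputable def cellMassDiscretization (μ : Measure α) (I : ι → Set α) (y : ι → α) :
    Measure α :=
  ∑ j, μ (I j) • Measure.dirac (y j)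

theorem sum_measure_eq_measure_univ (hmeas : ∀ j, MeasurableSet (I j))
    (hdisj : Pairwise (Function.onFun Disjoint I)) (hcover : ∀ᵐ z ∂μ, z ∈ ⋃ j, I j) :
    ∑ j, μ (I j) = μ univ := by
  rw [← tsum_fintype (L := .unconditional _), ← measure_iUnion hdisj hmeas]
  exact measure_congr (ae_eq_univ.2 (ae_iff.1 hcover))

theorem sum_measureReal_eq_measureReal_univ [IsFiniteMeasure μ]
    (hmeas : ∀ j, MeasurableSet (I j))
    (hdisj : Pairwise (Function.onFun Disjoint I)) (hcover : ∀ᵐ z ∂μ, z ∈ ⋃ j, I j) :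
    ∑ j, μ.real (I j) = μ.real univ := by
  simp only [measureReal_def]
  rw [← ENNReal.toReal_sum fun j _ => measure_ne_top μ _,
    sum_measure_eq_measure_univ hmeas hdisj hcover]

theorem isProbabilityMeasure_cellMassDiscretization [IsProbabilityMeasure μ]
    (hmeas : ∀ j, MeasurableSet (I j)) (hdisj : Pairwise (Function.onFun Disjoint I))
    (hcover : ∀ᵐ z ∂μ, z ∈ ⋃ j, I j) :
    IsProbabilityMeasure (cellMassDiscretization μ I y) :=
  ⟨by simp [cellMassDiscretization, sum_measure_eq_measure_univ hmeas hdisj hcover]⟩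

variable [MeasurableSingletonClass α]

theorem ae_cellMassDiscretization {P : α → Prop} (hP : ∀ j, P (y j)) :
    ∀ᵐ z ∂cellMassDiscretization μ I y, P z := by
  rw [ae_iff]
  simp [cellMassDiscretization, hP]

theorem integral_cellMassDiscretization [IsFiniteMeasure μ] {E : Type*} [NormedAddCommGroup E]
    [NormedSpace ℝ E] [CompleteSpace E] (g : α → E) :
    ∫ z, g z ∂cellMassDiscretization μ I y = ∑ j, μ.real (I j) • g (y j) := by
  rw [cellMassDiscretization, integral_finsetSum_measure fun j _ =>
    (integrable_dirac enorm_lt_top).smul_measure (measure_ne_top μ _)]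
  simp [integral_smul_measure, integral_dirac, measureReal_def]

theorem abs_integral_cellMassDiscretization_sub_le [IsFiniteMeasure μ]
    (hmeas : ∀ j, MeasurableSet (I j)) (hdisj : Pairwise (Function.onFun Disjoint I))
    (hcover : ∀ᵐ z ∂μ, z ∈ ⋃ j, I j) {g : α → ℝ} (hg : Integrable g μ) {η : ℝ}
    (hη : ∀ j, ∀ z ∈ I j, |g (y j) - g z| ≤ η) :
    |∫ z, g z ∂cellMassDiscretization μ I y - ∫ z, g z ∂μ| ≤ μ.real univ * η := by
  have hsplit : ∫ z, g z ∂μ = ∑ j, ∫ z in I j, g z ∂μ := by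
    rw [← tsum_fintype (L := .unconditional _), ← integral_iUnion hmeas hdisj hg.integrableOn,
      Measure.restrict_eq_self_of_ae_mem hcover]
  have hcell : ∀ j, |μ.real (I j) * g (y j) - ∫ z in I j, g z ∂μ| ≤ μ.real (I j) * η := by
    intro j
    rw [← smul_eq_mul, ← setIntegral_const,
      ← integral_sub (integrableOn_const (C := g (y j))) hg.integrableOn,
      ← Real.norm_eq_abs, mul_comm]
    exact norm_setIntegral_le_of_norm_le_const (measure_lt_top μ _) (hη j)
  calc |∫ z, g z ∂cellMassDiscretization μ I y - ∫ z, g z ∂μ|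
      = |∑ j, (μ.real (I j) * g (y j) - ∫ z in I j, g z ∂μ)| := by
        rw [integral_cellMassDiscretization, hsplit, Finset.sum_sub_distrib]
        rfl
    _ ≤ ∑ j, μ.real (I j) * η :=
        (Finset.abs_sum_le_sum_abs _ _).trans (Finset.sum_le_sum fun j _ => hcell j)
    _ = μ.real univ * η := by
        rw [← Finset.sum_mul, sum_measureReal_eq_measureReal_univ hmeas hdisj hcover]

theorem abs_integral_cellMassDiscretization_sub_le_of_lipschitzOn [PseudoMetricSpace α]
    [IsFiniteMeasure μ] (hmeas : ∀ j, MeasurableSet (I j))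
    (hdisj : Pairwise (Function.onFun Disjoint I)) (hcover : ∀ᵐ z ∂μ, z ∈ ⋃ j, I j)
    {g : α → ℝ} (hg : Integrable g μ) {S : Set α} {L ε : ℝ} (hL : 0 ≤ L)
    (hgS : ∀ a ∈ S, ∀ b ∈ S, |g a - g b| ≤ L * dist a b) (hyS : ∀ j, y j ∈ S)
    (hIS : ∀ j, I j ⊆ S) (hIy : ∀ j, I j ⊆ Metric.closedBall (y j) ε) :
    |∫ z, g z ∂cellMassDiscretization μ I y - ∫ z, g z ∂μ| ≤ μ.real univ * (L * ε) :=
  abs_integral_cellMassDiscretization_sub_le hmeas hdisj hcover hg fun j z hz =>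
    (hgS _ (hyS j) z (hIS j hz)).trans
      (mul_le_mul_of_nonneg_left (Metric.mem_closedBall'.1 (hIy j hz)) hL)

end CellMassDiscretization

theorem IsCompact.exists_forall_integrable_and_integral_le {X : Type*} [TopologicalSpace X]
    [MeasurableSpace X] [OpensMeasurableSpace X] {S : Set X} (hS : IsCompact S)
    {k : X × X → ℝ} (hk : Continuous k) :
    ∃ C, ∀ (μ : Measure X) [IsProbabilityMeasure μ], (∀ᵐ z ∂μ, z ∈ S) → ∀ x ∈ S,
      Integrable (fun z => k (x, z)) μ ∧ ∫ z, k (x, z) ∂μ ≤ C := by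
  obtain ⟨C, hC⟩ := (hS.prod hS).exists_bound_of_continuousOn hk.continuousOn
  refine ⟨C, fun μ _ hμ x hx => ?_⟩
  have hbound : ∀ᵐ z ∂μ, ‖k (x, z)‖ ≤ C := hμ.mono fun z hz => hC (x, z) ⟨hx, hz⟩
  refine ⟨.of_bound (hk.comp (.prodMk_right x)).aestronglyMeasurable C hbound,
    (Real.le_norm_self _).trans ?_⟩
  simpa using norm_integral_le_of_norm_le_const hbound

theorem integrable_log_of_ae_mem_Icc {α : Type*} [MeasurableSpace α] {μ : Measure α}
    [IsFiniteMeasure μ] {f : α → ℝ} (hf : AEStronglyMeasurable f μ) {δ C : ℝ} (hδ : 0 < δ)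
    (hfδC : ∀ᵐ x ∂μ, f x ∈ Icc δ C) : Integrable (fun x => Real.log (f x)) μ := by
  obtain ⟨B, hB⟩ := isCompact_Icc.exists_bound_of_continuousOn
    (Real.continuousOn_log.mono fun t ht => (hδ.trans_le ht.1).ne')
  exact .of_bound (Real.measurable_log.comp_aemeasurable hf.aemeasurable).aestronglyMeasurable
    B (hfδC.mono fun x hx => hB _ hx)

theorem log_sub_log_le_div_of_abs_sub_le {a b c δ : ℝ} (ha : 0 < a) (hδ : 0 < δ) (hδb : δ ≤ b)
    (hab : |b - a| ≤ c) : Real.log a - Real.log b ≤ c / δ := by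
  have hb : 0 < b := hδ.trans_le hδb
  calc Real.log a - Real.log b = Real.log (a / b) := (Real.log_div ha.ne' hb.ne').symm
    _ ≤ a / b - 1 := Real.log_le_sub_one_of_pos (div_pos ha hb)
    _ = (a - b) / b := by field_simp
    _ ≤ c / δ := by
      rw [abs_sub_comm] at hab
      exact div_le_div₀ ((abs_nonneg _).trans hab) ((le_abs_self _).trans hab) hδ hδb

theorem RDobjective_sub_le_of_ae_abs_integral_sub_le {d : ℕ}
    {ρ : ((Fin d → ℝ) × (Fin d → ℝ)) → ℝ} (hρ : Measurable ρ) (β : ℝ)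
    {p r₁ r₂ : Measure (Fin d → ℝ)} [IsProbabilityMeasure p] [SFinite r₁] [SFinite r₂]
    {δ C c : ℝ} (hδ : 0 < δ)
    (h₁ : ∀ᵐ x ∂p, ∫ z, Real.exp (-β * ρ (x, z)) ∂r₁ ∈ Icc δ C)
    (h₂ : ∀ᵐ x ∂p, ∫ z, Real.exp (-β * ρ (x, z)) ∂r₂ ∈ Icc δ C)
    (hclose : ∀ᵐ x ∂p,
      |∫ z, Real.exp (-β * ρ (x, z)) ∂r₂ - ∫ z, Real.exp (-β * ρ (x, z)) ∂r₁| ≤ c) :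
    RDobjective ρ β p r₂ - RDobjective ρ β p r₁ ≤ c / δ := by
  have hF : StronglyMeasurable fun w => Real.exp (-β * ρ w) :=
    (measurable_const.mul hρ).exp.stronglyMeasurable
  have hlog₁ := integrable_log_of_ae_mem_Icc
    (hF.integral_prod_right' (ν := r₁)).aestronglyMeasurable hδ h₁
  have hlog₂ := integrable_log_of_ae_mem_Icc
    (hF.integral_prod_right' (ν := r₂)).aestronglyMeasurable hδ h₂
  calc RDobjective ρ β p r₂ - RDobjective ρ β p r₁
      = ∫ x, (Real.log (∫ z, Real.exp (-β * ρ (x, z)) ∂r₁)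
          - Real.log (∫ z, Real.exp (-β * ρ (x, z)) ∂r₂)) ∂p := by
        rw [integral_sub hlog₁ hlog₂, RDobjective, RDobjective]
        ring
    _ ≤ ∫ _, c / δ ∂p := integral_mono_ae (hlog₁.sub hlog₂) (integrable_const _) <| by
        filter_upwards [h₁, h₂, hclose] with x ha hb hab
        exact log_sub_log_le_div_of_abs_sub_le (hδ.trans_le ha.1) hδ hb.1 hab
    _ = c / δ := by simp

theorem discrete_RD_value_error_general {d n : ℕ}
    (ρ : ((Fin d → ℝ) × (Fin d → ℝ)) → ℝ) (hρ : Continuous ρ)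
    (β M h L δ₀ : ℝ) (hL : 0 < L) (hδ₀ : 0 < δ₀)
    (p rstar rn : Measure (Fin d → ℝ))
    [IsProbabilityMeasure p] [IsProbabilityMeasure rstar] [IsProbabilityMeasure rn]
    (hp : p {x : Fin d → ℝ | ‖x‖ ≤ M} = 1)
    (hrstarsupp : rstar {z : Fin d → ℝ | ‖z‖ ≤ M} = 1)
    -- `r*` is optimal among all probability measures on `ℝ^d`
    (hstaropt : ∀ r : Measure (Fin d → ℝ), IsProbabilityMeasure r →
      RDobjective ρ β p rstar ≤ RDobjective ρ β p r)
    -- the uniform grid `{y_j^n}` of `[-M,M]^d` with cells `I_j` of side `h`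
    (y : Fin n → (Fin d → ℝ)) (I : Fin n → Set (Fin d → ℝ))
    (hymem : ∀ j, ‖y j‖ ≤ M)
    (hmeas : ∀ j, MeasurableSet (I j))
    (hdisj : Pairwise (Function.onFun Disjoint I))
    (hcover : (⋃ j, I j) = {z : Fin d → ℝ | ‖z‖ ≤ M})
    (hcell : ∀ j, I j ⊆ Metric.closedBall (y j) (h / 2))
    -- `rⁿ` minimizes `f` over discrete measures supported on the grid
    (hrnopt : ∀ c : Fin n → ENNReal, (∑ j, c j) = 1 →
      RDobjective ρ β p rn ≤ RDobjective ρ β p (∑ j, c j • Measure.dirac (y j)))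
    -- uniform `L`-Lipschitz property of `exp (-β ρ (x, ·))` on `[-M,M]^d`
    (hLip : ∀ x : Fin d → ℝ, ‖x‖ ≤ M → ∀ y₁ y₂ : Fin d → ℝ, ‖y₁‖ ≤ M → ‖y₂‖ ≤ M →
      |Real.exp (-β * ρ (x, y₁)) - Real.exp (-β * ρ (x, y₂))| ≤ L * ‖y₁ - y₂‖)
    -- uniform lower bound `δ₀` for `μ ∈ {qⁿ, r*}`, where `qⁿ` is the cell-mass
    -- discretization of `r*`
    (hlow : ∀ x : Fin d → ℝ, ‖x‖ ≤ M →
      δ₀ ≤ (∫ z, Real.exp (-β * ρ (x, z)) ∂(∑ j, rstar (I j) • Measure.dirac (y j))) ∧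
      δ₀ ≤ ∫ z, Real.exp (-β * ρ (x, z)) ∂rstar) :
    0 ≤ RDobjective ρ β p rn - RDobjective ρ β p rstar ∧
      RDobjective ρ β p rn - RDobjective ρ β p rstar ≤ L * h / (2 * δ₀) := by
  set S : Set (Fin d → ℝ) := {z | ‖z‖ ≤ M}
  set q := cellMassDiscretization rstar I y
  have hS : IsCompact S := by
    simpa [Metric.closedBall, dist_zero_right] using isCompact_closedBall (0 : Fin d → ℝ) M
  have hpS : ∀ᵐ x ∂p, x ∈ S := (mem_ae_iff_prob_eq_one hS.measurableSet).2 hp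
  have hrstarS : ∀ᵐ z ∂rstar, z ∈ S := (mem_ae_iff_prob_eq_one hS.measurableSet).2 hrstarsupp
  have hcover' : ∀ᵐ z ∂rstar, z ∈ ⋃ j, I j := hcover ▸ hrstarS
  have : IsProbabilityMeasure q := isProbabilityMeasure_cellMassDiscretization hmeas hdisj hcover'
  obtain ⟨C, hC⟩ :=
    hS.exists_forall_integrable_and_integral_le (k := fun w => Real.exp (-β * ρ w)) (by fun_prop)
  have hclose : ∀ x ∈ S, |∫ z, Real.exp (-β * ρ (x, z)) ∂q
      - ∫ z, Real.exp (-β * ρ (x, z)) ∂rstar| ≤ L * (h / 2) := fun x hx => by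
    simpa using abs_integral_cellMassDiscretization_sub_le_of_lipschitzOn hmeas hdisj hcover'
      (hC rstar hrstarS x hx).1 hL.le
      (fun a ha b hb => by simpa [dist_eq_norm] using hLip x hx a b ha hb) hymem
      (fun j => hcover ▸ subset_iUnion I j) hcell
  refine ⟨sub_nonneg.2 (hstaropt rn inferInstance), ?_⟩
  calc RDobjective ρ β p rn - RDobjective ρ β p rstar
      ≤ RDobjective ρ β p q - RDobjective ρ β p rstar :=
        sub_le_sub_right (hrnopt _ <|
          (sum_measure_eq_measure_univ hmeas hdisj hcover').trans measure_univ) _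
    _ ≤ L * (h / 2) / δ₀ := by
      refine RDobjective_sub_le_of_ae_abs_integral_sub_le hρ.measurable β (C := C) hδ₀
        ?_ ?_ ?_ <;> filter_upwards [hpS] with x hx
      · exact ⟨(hlow x hx).2, (hC rstar hrstarS x hx).2⟩
      · exact ⟨(hlow x hx).1, (hC q (ae_cellMassDiscretization hymem) x hx).2⟩
      · exact hclose x hx
    _ = L * h / (2 * δ₀) := by ring

/-- the optimal values of the RD problem restricted to measures supported on
the `n`-point uniform grid of `[-M,M]^d` satisfy `0 ≤ f(rⁿ) - f(r*) ≤ L h/(2δ₀)`,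
`h = 2M/n^{1/d}`, under the Lipschitz and lower-bound assumptions. -/
theorem discrete_RD_value_error {d n : ℕ}
    (ρ : ((Fin d → ℝ) × (Fin d → ℝ)) → ℝ) (hρ : Continuous ρ)
    (β M h L δ₀ : ℝ) (hβ : 0 < β) (hM : 0 < M) (hL : 0 < L) (hδ₀ : 0 < δ₀)
    (hstep : h = 2 * M / (n : ℝ) ^ ((d : ℝ)⁻¹))
    (p rstar rn : Measure (Fin d → ℝ))
    [IsProbabilityMeasure p] [IsProbabilityMeasure rstar] [IsProbabilityMeasure rn]
    (hp : p {x : Fin d → ℝ | ‖x‖ ≤ M} = 1)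
    (hrstarsupp : rstar {z : Fin d → ℝ | ‖z‖ ≤ M} = 1)
    -- `r*` is optimal among all probability measures on `ℝ^d`
    (hstaropt : ∀ r : Measure (Fin d → ℝ), IsProbabilityMeasure r →
      RDobjective ρ β p rstar ≤ RDobjective ρ β p r)
    -- the uniform grid `{y_j^n}` of `[-M,M]^d` with cells `I_j` of side `h`
    (y : Fin n → (Fin d → ℝ)) (I : Fin n → Set (Fin d → ℝ))
    (hymem : ∀ j, ‖y j‖ ≤ M)
    (hmeas : ∀ j, MeasurableSet (I j))
    (hdisj : Pairwise (Function.onFun Disjoint I))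
    (hcover : (⋃ j, I j) = {z : Fin d → ℝ | ‖z‖ ≤ M})
    (hcell : ∀ j, I j ⊆ Metric.closedBall (y j) (h / 2))
    -- `rⁿ` minimizes `f` over discrete measures supported on the grid
    (hrnform : ∃ c : Fin n → ENNReal, (∑ j, c j) = 1 ∧
      rn = ∑ j, c j • Measure.dirac (y j))
    (hrnopt : ∀ c : Fin n → ENNReal, (∑ j, c j) = 1 →
      RDobjective ρ β p rn ≤ RDobjective ρ β p (∑ j, c j • Measure.dirac (y j)))
    -- uniform `L`-Lipschitz property of `exp (-β ρ (x, ·))` on `[-M,M]^d`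
    (hLip : ∀ x : Fin d → ℝ, ‖x‖ ≤ M → ∀ y₁ y₂ : Fin d → ℝ, ‖y₁‖ ≤ M → ‖y₂‖ ≤ M →
      |Real.exp (-β * ρ (x, y₁)) - Real.exp (-β * ρ (x, y₂))| ≤ L * ‖y₁ - y₂‖)
    -- uniform lower bound `δ₀` for `μ ∈ {qⁿ, r*}`, where `qⁿ` is the cell-mass
    -- discretization of `r*`
    (hlow : ∀ x : Fin d → ℝ, ‖x‖ ≤ M →
      δ₀ ≤ (∫ z, Real.exp (-β * ρ (x, z)) ∂(∑ j, rstar (I j) • Measure.dirac (y j))) ∧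
      δ₀ ≤ ∫ z, Real.exp (-β * ρ (x, z)) ∂rstar) :
    0 ≤ RDobjective ρ β p rn - RDobjective ρ β p rstar ∧
      RDobjective ρ β p rn - RDobjective ρ β p rstar ≤ L * h / (2 * δ₀) :=
  discrete_RD_value_error_general ρ hρ β M h L δ₀ hL hδ₀ p rstar rn hp hrstarsupp hstaropt y I hymem
    hmeas hdisj hcover hcell hrnopt hLip hlow
end

section
/- For a probability measure q on ℝ^d, a probability measure p on ℝ^d, a nonnegative measurable distortion ρ, and β > 0, the function G_q(β) = ∫ [(∫ e^{-βρ(x,y)} ρ(x,y) dq(y)) / (∫ e^{-βρ(x,y)} dq(y))] dp(x) - D is strictly decreasing in β, provided that for p-almost every x, ρ(x,·) is not q-almost-everywhere constant. Its derivative equals minus the p-average of the conditional variance of ρ(x,Y) under the tilted measure, which is strictly negative by the Cauchy–Schwarz inequality. -/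
/-!
`V x β` is the variance of `ρ (x, ·)` under the tilted measure `q.tilted (-β * ρ (x, ·))`,
which is equivalent to `q` because its density is positive. A random variable that is not a.e.
constant has positive variance, so `V x β > 0` for `p`-a.e. `x`, the derivative `-∫ V x β ∂p`
of `G` is negative, and `G` is strictly decreasing by the mean value theorem.
-/

open MeasureTheory ProbabilityTheory Real Set

section

variable {Ω : Type*} [MeasurableSpace Ω] {μ : Measure Ω} {X : Ω → ℝ} {t : ℝ}

lemma Iio_subset_interior_integrableExpSet_of_nonneg [IsFiniteMeasure μ] (hX : AEMeasurable X μ)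
    (hX0 : 0 ≤ᵐ[μ] X) : Iio 0 ⊆ interior (integrableExpSet X μ) := by
  refine isOpen_Iio.subset_interior_iff.2 fun t (ht : t < 0) ↦ ?_
  refine Integrable.of_bound (hX.const_mul t).exp.aestronglyMeasurable 1 ?_
  filter_upwards [hX0] with ω hω
  rw [norm_of_nonneg (exp_pos _).le, exp_le_one_iff]
  exact mul_nonpos_of_nonpos_of_nonneg ht.le hω

lemma variance_tilted_mul_eq_div (ht : t ∈ interior (integrableExpSet X μ)) :
    Var[X; μ.tilted (t * X ·)] =
      ((∫ ω, exp (t * X ω) ∂μ) * (∫ ω, exp (t * X ω) * X ω ^ 2 ∂μ)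
        - (∫ ω, exp (t * X ω) * X ω ∂μ) ^ 2) / (∫ ω, exp (t * X ω) ∂μ) ^ 2 := by
  rcases eq_zero_or_neZero μ with rfl | hμ
  · simp
  have hexp : Integrable (fun ω ↦ exp (t * X ω)) μ :=
    interior_subset (s := integrableExpSet X μ) ht
  have := isProbabilityMeasure_tilted hexp
  have hmgf : (∫ ω, exp (t * X ω) ∂μ) ≠ 0 := (mgf_pos_iff.2 hexp).ne'
  rw [variance_eq_sub (memLp_tilted_mul ht 2), integral_tilted_mul_eq_mgf,
    integral_tilted_mul_eq_mgf]
  simp only [mgf, smul_eq_mul, Pi.pow_apply, div_mul_eq_mul_div, integral_div]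
  field_simp

lemma variance_pos_of_not_ae_const [IsFiniteMeasure μ] (hX : MemLp X 2 μ)
    (hX_nc : ¬ ∃ c, ∀ᵐ ω ∂μ, X ω = c) : 0 < Var[X; μ] :=
  (variance_nonneg X μ).lt_of_ne fun h ↦
    hX_nc ⟨_, ae_eq_integral_of_variance_eq_zero hX h.symm⟩

lemma variance_tilted_mul_pos (ht : t ∈ interior (integrableExpSet X μ))
    (hX_nc : ¬ ∃ c, ∀ᵐ ω ∂μ, X ω = c) : 0 < Var[X; μ.tilted (t * X ·)] := by
  refine variance_pos_of_not_ae_const (memLp_tilted_mul ht 2) fun ⟨c, hc⟩ ↦ hX_nc ⟨c, ?_⟩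
  exact absolutelyContinuous_tilted (interior_subset (s := integrableExpSet X μ) ht) hc

lemma integral_pos_of_ae_pos [NeZero μ] {f : Ω → ℝ} (hf : Integrable f μ)
    (hpos : ∀ᵐ ω ∂μ, 0 < f ω) : 0 < ∫ ω, f ω ∂μ := by
  refine (integral_nonneg_of_ae (hpos.mono fun _ ↦ le_of_lt)).lt_of_ne fun h ↦ ?_
  have hzero := (integral_eq_zero_iff_of_nonneg_ae (hpos.mono fun _ ↦ le_of_lt) hf).1 h.symm
  obtain ⟨ω, hω, hω0⟩ := (hpos.and hzero).exists
  exact hω.ne' hω0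

end

theorem constraint_function_strictAnti_general {X Y : Type*} [MeasurableSpace X] [MeasurableSpace Y]
    (q : Measure Y) (p : Measure X) [IsProbabilityMeasure q] [IsProbabilityMeasure p]
    (ρ : X × Y → ℝ) (hρm : Measurable ρ) (hρ0 : ∀ z, 0 ≤ ρ z)
    (G : ℝ → ℝ)
    (V : X → ℝ → ℝ)
    (hV : ∀ x β, V x β =
      ((∫ y, Real.exp (-β * ρ (x, y)) ∂q) * (∫ y, Real.exp (-β * ρ (x, y)) * ρ (x, y) ^ 2 ∂q)
          - (∫ y, Real.exp (-β * ρ (x, y)) * ρ (x, y) ∂q) ^ 2)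
        / (∫ y, Real.exp (-β * ρ (x, y)) ∂q) ^ 2)
    -- differentiation under the integral sign is assumed valid
    (hderiv : ∀ β > 0, HasDerivAt G (-∫ x, V x β ∂p) β)
    -- all integrals are assumed finite
    (hint : ∀ β > 0, Integrable (fun x => V x β) p)
    -- non-degeneracy: for `p`-a.e. `x`, `ρ(x,·)` is not `q`-a.e. constant
    (hnc : ∀ᵐ x ∂p, ¬ ∃ c : ℝ, ∀ᵐ y ∂q, ρ (x, y) = c) :
    StrictAntiOn G (Set.Ioi 0) ∧ ∀ β > 0, (-∫ x, V x β ∂p) < 0 := by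
  have hV_pos : ∀ β > 0, ∀ᵐ x ∂p, 0 < V x β := fun β hβ ↦ by
    filter_upwards [hnc] with x hx
    have hβ' : -β ∈ interior (integrableExpSet (fun y ↦ ρ (x, y)) q) :=
      Iio_subset_interior_integrableExpSet_of_nonneg (hρm.comp measurable_prodMk_left).aemeasurable
        (.of_forall fun y ↦ hρ0 _) (neg_neg_of_pos hβ)
    rw [hV, ← variance_tilted_mul_eq_div hβ']
    exact variance_tilted_mul_pos hβ' hx
  have hderiv_neg : ∀ β > 0, (-∫ x, V x β ∂p) < 0 := fun β hβ ↦
    neg_neg_of_pos (integral_pos_of_ae_pos (hint β hβ) (hV_pos β hβ))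
  have hG_cont : ContinuousOn G (Ioi 0) := fun β hβ ↦
    (hderiv β hβ).continuousAt.continuousWithinAt
  refine ⟨strictAntiOn_of_hasDerivWithinAt_neg (f' := fun β ↦ -∫ x, V x β ∂p)
    (convex_Ioi 0) hG_cont ?_ ?_, hderiv_neg⟩ <;> rw [interior_Ioi]
  · exact fun β hβ ↦ (hderiv β hβ).hasDerivWithinAt
  · exact hderiv_neg

/-- the distortion constraint function
`G(β) = ∫ (∫ e^{-βρ}ρ dq)/(∫ e^{-βρ} dq) dp - D` is strictly decreasing on `(0,∞)`
(assuming differentiation under the integral sign, i.e. that `G` has the stated derivative),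
provided that for `p`-a.e. `x` the function `ρ(x,·)` is not `q`-a.e. constant; its derivative,
minus the `p`-average of the conditional variance of `ρ` under the tilted measure,
is strictly negative. -/
theorem constraint_function_strictAnti {X Y : Type*} [MeasurableSpace X] [MeasurableSpace Y]
    (q : Measure Y) (p : Measure X) [IsProbabilityMeasure q] [IsProbabilityMeasure p]
    (ρ : X × Y → ℝ) (hρm : Measurable ρ) (hρ0 : ∀ z, 0 ≤ ρ z) (D : ℝ)
    (G : ℝ → ℝ)
    (hG : ∀ β, G β = (∫ x, (∫ y, Real.exp (-β * ρ (x, y)) * ρ (x, y) ∂q)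
        / (∫ y, Real.exp (-β * ρ (x, y)) ∂q) ∂p) - D)
    (V : X → ℝ → ℝ)
    (hV : ∀ x β, V x β =
      ((∫ y, Real.exp (-β * ρ (x, y)) ∂q) * (∫ y, Real.exp (-β * ρ (x, y)) * ρ (x, y) ^ 2 ∂q)
          - (∫ y, Real.exp (-β * ρ (x, y)) * ρ (x, y) ∂q) ^ 2)
        / (∫ y, Real.exp (-β * ρ (x, y)) ∂q) ^ 2)
    -- differentiation under the integral sign is assumed valid
    (hderiv : ∀ β > 0, HasDerivAt G (-∫ x, V x β ∂p) β)
    -- all integrals are assumed finite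
    (hint : ∀ β > 0, Integrable (fun x => V x β) p)
    -- non-degeneracy: for `p`-a.e. `x`, `ρ(x,·)` is not `q`-a.e. constant
    (hnc : ∀ᵐ x ∂p, ¬ ∃ c : ℝ, ∀ᵐ y ∂q, ρ (x, y) = c) :
    StrictAntiOn G (Set.Ioi 0) ∧ ∀ β > 0, (-∫ x, V x β ∂p) < 0 :=
  constraint_function_strictAnti_general q p ρ hρm hρ0 G V hV hderiv hint hnc
end

section
/- Let βₙ → β̄ > 0 be a convergent sequence of positive reals, qⁿ probability measures, and ρ ≥ 0 a measurable distortion. Then sup_x |∫ e^{-βₙ ρ(x,y)} ρ(x,y) dqⁿ(y) - ∫ e^{-β̄ ρ(x,y)} ρ(x,y) dqⁿ(y)| → 0 as n → ∞. More precisely, for every ε > 0 there is N such that for all n ≥ N and all x, the difference is at most 2ε, obtained by splitting the integral into regions {ρ(x,y) > A₀} and {ρ(x,y) ≤ A₀} for suitable A₀. -/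
open MeasureTheory Filter

lemma aux_texp (c t : ℝ) (hc : 0 < c) (ht : 0 ≤ t) :
    t * Real.exp (-(c * t)) ≤ 1 / c := by
  have h1 : c * t ≤ Real.exp (c * t) := by
    have := Real.add_one_le_exp (c * t); linarith
  have h2 : Real.exp (-(c * t)) = (Real.exp (c * t))⁻¹ := Real.exp_neg _
  have h3 : (0:ℝ) < Real.exp (c * t) := Real.exp_pos _
  rw [h2, le_div_iff₀ hc]
  calc t * (Real.exp (c*t))⁻¹ * c = (c * t) * (Real.exp (c*t))⁻¹ := by ring
    _ ≤ Real.exp (c*t) * (Real.exp (c*t))⁻¹ := by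
        apply mul_le_mul_of_nonneg_right h1 (by positivity)
    _ = 1 := mul_inv_cancel₀ (ne_of_gt h3)

lemma aux_t2exp (c t : ℝ) (hc : 0 < c) (ht : 0 ≤ t) :
    t^2 * Real.exp (-(c * t)) ≤ 4 / c^2 := by
  have h := aux_texp (c/2) t (by linarith) ht
  have e : Real.exp (-(c*t)) = Real.exp (-((c/2)*t)) * Real.exp (-((c/2)*t)) := by
    rw [← Real.exp_add]; ring_nf
  have hnn : 0 ≤ t * Real.exp (-((c/2)*t)) := by positivity
  calc t^2 * Real.exp (-(c*t)) = (t * Real.exp (-((c/2)*t)))^2 := by rw [e]; ring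
    _ ≤ (1/(c/2))^2 := by apply pow_le_pow_left₀ hnn h
    _ = 4 / c^2 := by field_simp; ring

lemma aux_expdiff (a b c t : ℝ) (hab : a ≤ b) (hc : 0 < c) (hca : c ≤ a) (ht : 0 ≤ t) :
    Real.exp (-(a * t)) - Real.exp (-(b * t)) ≤ (b - a) * t * Real.exp (-(c * t)) := by
  have key : Real.exp (-(a*t)) - Real.exp (-(b*t))
      ≤ (b - a) * t * Real.exp (-(a*t)) := by
    have e : Real.exp (-(b*t)) = Real.exp (-(a*t)) * Real.exp (-((b-a)*t)) := by
      rw [← Real.exp_add]; ring_nf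
    have h1 : 1 - Real.exp (-((b-a)*t)) ≤ (b-a)*t := by
      have := Real.add_one_le_exp (-((b-a)*t)); linarith
    have h2 : (0:ℝ) < Real.exp (-(a*t)) := Real.exp_pos _
    calc Real.exp (-(a*t)) - Real.exp (-(b*t))
        = Real.exp (-(a*t)) * (1 - Real.exp (-((b-a)*t))) := by rw [e]; ring
      _ ≤ Real.exp (-(a*t)) * ((b-a)*t) := by
          apply mul_le_mul_of_nonneg_left h1 h2.le
      _ = (b - a) * t * Real.exp (-(a*t)) := by ring
  refine key.trans ?_
  have : Real.exp (-(a*t)) ≤ Real.exp (-(c*t)) := by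
    apply Real.exp_le_exp.2; nlinarith
  have hba : 0 ≤ (b - a) * t := by nlinarith
  nlinarith

lemma aux_main (a b c t : ℝ) (hc : 0 < c) (hca : c ≤ a) (hcb : c ≤ b) (ht : 0 ≤ t) :
    |Real.exp (-(a * t)) * t - Real.exp (-(b * t)) * t| ≤ |a - b| * (4 / c^2) := by
  have habs : |Real.exp (-(a*t)) - Real.exp (-(b*t))| ≤ |a - b| * t * Real.exp (-(c*t)) := by
    rcases le_total a b with h | h
    · have h1 : Real.exp (-(b*t)) ≤ Real.exp (-(a*t)) :=
        Real.exp_le_exp.2 (by nlinarith)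
      rw [abs_of_nonneg (by linarith), abs_of_nonpos (show a - b ≤ 0 by linarith)]
      have := aux_expdiff a b c t h hc hca ht
      nlinarith [Real.exp_pos (-(c*t))]
    · have h1 : Real.exp (-(a*t)) ≤ Real.exp (-(b*t)) :=
        Real.exp_le_exp.2 (by nlinarith)
      rw [abs_of_nonpos (by linarith), abs_of_nonneg (show (0:ℝ) ≤ a - b by linarith)]
      have := aux_expdiff b a c t h hc hcb ht
      nlinarith [Real.exp_pos (-(c*t))]
  have e : Real.exp (-(a*t)) * t - Real.exp (-(b*t)) * t
      = (Real.exp (-(a*t)) - Real.exp (-(b*t))) * t := by ring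
  calc |Real.exp (-(a*t)) * t - Real.exp (-(b*t)) * t|
      = |Real.exp (-(a*t)) - Real.exp (-(b*t))| * t := by
        rw [e, abs_mul, abs_of_nonneg ht]
    _ ≤ (|a - b| * t * Real.exp (-(c*t))) * t := by
        apply mul_le_mul_of_nonneg_right habs ht
    _ = |a - b| * (t^2 * Real.exp (-(c*t))) := by ring
    _ ≤ |a - b| * (4 / c^2) := by
        apply mul_le_mul_of_nonneg_left (aux_t2exp c t hc ht) (abs_nonneg _)

lemma aux_integrable {Y : Type*} [MeasurableSpace Y] (f : Y → ℝ) (b : ℝ) (hb : 0 < b)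
    (hf : Measurable f) (hf0 : ∀ y, 0 ≤ f y) (μ : Measure Y) [IsProbabilityMeasure μ] :
    Integrable (fun y => Real.exp (-b * f y) * f y) μ := by
  apply Integrable.mono' (integrable_const (1/b))
  · have : (fun y => Real.exp (-b * f y) * f y) = fun y => Real.exp (-(b * f y)) * f y := by
      simp [neg_mul]
    rw [this]
    exact ((((hf.const_mul b).neg).exp).mul hf).aestronglyMeasurable
  · filter_upwards with y
    have h1 : 0 ≤ Real.exp (-b * f y) * f y := mul_nonneg (Real.exp_nonneg _) (hf0 y)
    rw [Real.norm_eq_abs, abs_of_nonneg h1]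
    have := aux_texp b (f y) hb (hf0 y)
    rw [neg_mul]
    linarith

theorem tilted_integral_uniform_convergence {X Y : Type*} [MeasurableSpace Y]
    (ρ : X × Y → ℝ) (hρ0 : ∀ z, 0 ≤ ρ z) (hρm : ∀ x, Measurable fun y => ρ (x, y))
    (q : ℕ → Measure Y) [∀ n, IsProbabilityMeasure (q n)]
    (β : ℕ → ℝ) (βbar : ℝ) (hβbar : 0 < βbar) (hβpos : ∀ n, 0 < β n)
    (hβ : Tendsto β atTop (nhds βbar)) :
    Tendsto (fun n => ⨆ x : X,
        |(∫ y, Real.exp (-(β n) * ρ (x, y)) * ρ (x, y) ∂(q n))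
          - ∫ y, Real.exp (-βbar * ρ (x, y)) * ρ (x, y) ∂(q n)|) atTop (nhds 0) ∧
    ∀ ε > 0, ∃ N : ℕ, ∀ n ≥ N, ∀ x : X,
        |(∫ y, Real.exp (-(β n) * ρ (x, y)) * ρ (x, y) ∂(q n))
          - ∫ y, Real.exp (-βbar * ρ (x, y)) * ρ (x, y) ∂(q n)| ≤ 2 * ε := by
  set c := βbar / 2 with hcdef
  have hcpos : 0 < c := by positivity
  have claim : ∀ ε > 0, ∃ N : ℕ, ∀ n ≥ N, ∀ x : X,
      |(∫ y, Real.exp (-(β n) * ρ (x, y)) * ρ (x, y) ∂(q n))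
        - ∫ y, Real.exp (-βbar * ρ (x, y)) * ρ (x, y) ∂(q n)| ≤ ε := by
    intro ε hε
    obtain ⟨N, hN⟩ := (Metric.tendsto_atTop.1 hβ) (min c (ε * c^2 / 4)) (by positivity)
    refine ⟨N, fun n hn x => ?_⟩
    have hd := hN n hn
    rw [Real.dist_eq] at hd
    have hd1 : |β n - βbar| < c := lt_of_lt_of_le hd (min_le_left _ _)
    have hd2 : |β n - βbar| ≤ ε * c^2 / 4 := le_of_lt (lt_of_lt_of_le hd (min_le_right _ _))
    have hβn : c ≤ β n := by
      have := abs_lt.1 hd1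
      have : βbar - c < β n := by linarith [this.1]
      rw [hcdef] at *; linarith
    have hβbar' : c ≤ βbar := by rw [hcdef]; linarith
    have hpt : ∀ y, ‖Real.exp (-(β n) * ρ (x,y)) * ρ (x,y)
        - Real.exp (-βbar * ρ (x,y)) * ρ (x,y)‖ ≤ ε := by
      intro y
      rw [Real.norm_eq_abs, neg_mul, neg_mul]
      have h := aux_main (β n) βbar c (ρ (x,y)) hcpos hβn hβbar' (hρ0 (x,y))
      have h2 : |β n - βbar| * (4 / c^2) ≤ (ε * c^2 / 4) * (4 / c^2) := by
        apply mul_le_mul_of_nonneg_right hd2 (by positivity)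
      have h3 : (ε * c^2 / 4) * (4 / c^2) = ε := by field_simp
      linarith
    have hint1 := aux_integrable (fun y => ρ (x,y)) (β n) (hβpos n) (hρm x) (fun y => hρ0 (x,y)) (q n)
    have hint2 := aux_integrable (fun y => ρ (x,y)) βbar hβbar (hρm x) (fun y => hρ0 (x,y)) (q n)
    rw [← integral_sub hint1 hint2, ← Real.norm_eq_abs]
    calc ‖∫ y, (Real.exp (-(β n) * ρ (x,y)) * ρ (x,y)
          - Real.exp (-βbar * ρ (x,y)) * ρ (x,y)) ∂(q n)‖
        ≤ ε * ((q n) Set.univ).toReal :=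
          norm_integral_le_of_norm_le_const (Filter.Eventually.of_forall hpt)
      _ = ε := by simp
  constructor
  · rw [Metric.tendsto_atTop]
    intro ε hε
    obtain ⟨N, hN⟩ := claim (ε / 2) (by linarith)
    refine ⟨N, fun n hn => ?_⟩
    rw [Real.dist_eq, sub_zero]
    rcases isEmpty_or_nonempty X with hX | hX
    · rw [Real.iSup_of_isEmpty, abs_zero]
      exact hε
    · have hbdd : BddAbove (Set.range fun x : X =>
        |(∫ y, Real.exp (-(β n) * ρ (x, y)) * ρ (x, y) ∂(q n))
          - ∫ y, Real.exp (-βbar * ρ (x, y)) * ρ (x, y) ∂(q n)|) := by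
        refine ⟨ε / 2, ?_⟩
        rintro r ⟨x, rfl⟩
        exact hN n hn x
      have hsup_le : (⨆ x : X,
          |(∫ y, Real.exp (-(β n) * ρ (x, y)) * ρ (x, y) ∂(q n))
            - ∫ y, Real.exp (-βbar * ρ (x, y)) * ρ (x, y) ∂(q n)|) ≤ ε / 2 :=
        ciSup_le fun x => hN n hn x
      have hsup_nn : 0 ≤ (⨆ x : X,
          |(∫ y, Real.exp (-(β n) * ρ (x, y)) * ρ (x, y) ∂(q n))
            - ∫ y, Real.exp (-βbar * ρ (x, y)) * ρ (x, y) ∂(q n)|) :=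
        le_trans (abs_nonneg _) (le_ciSup hbdd (Classical.arbitrary X))
      rw [abs_of_nonneg hsup_nn]
      linarith
  · intro ε hε
    obtain ⟨N, hN⟩ := claim ε hε
    exact ⟨N, fun n hn x => le_trans (hN n hn x) (by linarith)⟩
end

section
/- For any probability measure q on ℝ^d, β > 0, and x, with A_x = -(1/β) log ∫ e^{-βρ(x,y)} dq(y), one has ∫ e^{-βρ(x,y)} ρ(x,y) dq(y) ≤ A_x e^{-β A_x} + e^{-β max(A_x, 1/β)} max(A_x, 1/β). Consequently the ratio (∫ e^{-βρ} ρ dq)/(∫ e^{-βρ} dq) is bounded above by 2A_x + 1/β. -/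
open MeasureTheory

lemma tilted_pointwise_bound (β A t : ℝ) (hβ : 0 < β) (hA : 0 ≤ A) (ht : 0 ≤ t) :
    Real.exp (-β * t) * t
      ≤ A * Real.exp (-β * t) + Real.exp (-β * max A (1/β)) * max A (1/β) := by
  set M := max A (1/β) with hMdef
  have hM : 1/β ≤ M := le_max_right _ _
  have hMpos : 0 < M := lt_of_lt_of_le (by positivity) hM
  have hexp1 := Real.exp_pos (-β * t)
  have hexp2 := Real.exp_pos (-β * M)
  rcases le_or_gt t A with h | h
  · nlinarith [mul_le_mul_of_nonneg_left h hexp1.le]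
  · have key : Real.exp (-β * t) * t ≤ Real.exp (-β * M) * M := by
      rcases le_or_gt t M with h2 | h2
      · have hM1 : M = 1/β := by
          rcases le_total A (1/β) with hc | hc
          · exact max_eq_right hc
          · exfalso; have hMA : M = A := max_eq_left hc
            rw [hMA] at h2; linarith
        have h1 : β * t ≤ Real.exp (β * t - 1) := by
          linarith [Real.add_one_le_exp (β * t - 1)]
        have h3 : Real.exp (β * t - 1) * Real.exp (-β * t) = Real.exp (-1) := by
          rw [← Real.exp_add]; ring_nf
        have h4 : β * t * Real.exp (-β * t) ≤ Real.exp (-1) := by nlinarith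
        have h5 : Real.exp (-β * M) * M = Real.exp (-1) / β := by
          rw [hM1]; rw [show -β * (1/β) = -1 by field_simp]; ring
        rw [h5, le_div_iff₀ hβ]
        nlinarith
      · have h1 : 1 + β * (t - M) ≤ Real.exp (β * (t - M)) := by
          linarith [Real.add_one_le_exp (β * (t - M))]
        have hβM : 1 ≤ M * β := (div_le_iff₀ hβ).mp hM
        have h2' : t ≤ M * Real.exp (β * (t - M)) := by nlinarith
        have h3 : Real.exp (β * (t - M)) * Real.exp (-β * t) = Real.exp (-β * M) := by
          rw [← Real.exp_add]; ring_nf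
        nlinarith [mul_le_mul_of_nonneg_left h2' hexp1.le]
    nlinarith

/-- with `A_x = -(1/β) log ∫ e^{-βρ(x,y)} dq(y)`, one has
`∫ e^{-βρ}ρ dq ≤ A_x e^{-βA_x} + e^{-β max(A_x,1/β)} max(A_x,1/β)`, and consequently
`(∫ e^{-βρ}ρ dq)/(∫ e^{-βρ} dq) ≤ 2 A_x + 1/β`. -/
theorem tilted_mean_distortion_bound {d : ℕ} {X : Type*}
    (ρ : (X × (Fin d → ℝ)) → ℝ) (hρ0 : ∀ z, 0 ≤ ρ z)
    (β : ℝ) (hβ : 0 < β)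
    (q : Measure (Fin d → ℝ)) [IsProbabilityMeasure q]
    (x : X) (hρm : Measurable fun y => ρ (x, y)) :
    (∫ y, Real.exp (-β * ρ (x, y)) * ρ (x, y) ∂q)
        ≤ (-(1 / β) * Real.log (∫ y, Real.exp (-β * ρ (x, y)) ∂q))
            * Real.exp (-β * (-(1 / β) * Real.log (∫ y, Real.exp (-β * ρ (x, y)) ∂q)))
          + Real.exp (-β * max (-(1 / β) * Real.log (∫ y, Real.exp (-β * ρ (x, y)) ∂q)) (1 / β))
            * max (-(1 / β) * Real.log (∫ y, Real.exp (-β * ρ (x, y)) ∂q)) (1 / β) ∧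
      (∫ y, Real.exp (-β * ρ (x, y)) * ρ (x, y) ∂q) / (∫ y, Real.exp (-β * ρ (x, y)) ∂q)
        ≤ 2 * (-(1 / β) * Real.log (∫ y, Real.exp (-β * ρ (x, y)) ∂q)) + 1 / β := by
  set Z := ∫ y, Real.exp (-β * ρ (x, y)) ∂q with hZdef
  set A := -(1 / β) * Real.log Z with hAdef
  set M := max A (1 / β) with hMdef
  have hm1 : Measurable fun y => Real.exp (-β * ρ (x, y)) := (hρm.const_mul (-β)).exp
  have hint1 : Integrable (fun y => Real.exp (-β * ρ (x, y))) q := by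
    refine (integrable_const (1 : ℝ)).mono' hm1.aestronglyMeasurable ?_
    filter_upwards with y
    rw [Real.norm_eq_abs, abs_of_pos (Real.exp_pos _)]
    exact Real.exp_le_one_iff.mpr (by nlinarith [hρ0 (x, y)])
  have hint2 : Integrable (fun y => Real.exp (-β * ρ (x, y)) * ρ (x, y)) q := by
    refine (integrable_const (1 / β : ℝ)).mono' (hm1.mul hρm).aestronglyMeasurable ?_
    filter_upwards with y
    have ht := hρ0 (x, y)
    rw [Real.norm_eq_abs, abs_of_nonneg (by positivity)]
    -- t * exp(-βt) ≤ 1/β : since β t exp(-βt) ≤ exp(βt-1)·exp(-βt) = e^{-1} ≤ 1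
    have h1 : β * ρ (x, y) ≤ Real.exp (β * ρ (x, y) - 1) := by
      linarith [Real.add_one_le_exp (β * ρ (x, y) - 1)]
    have h3 : Real.exp (β * ρ (x, y) - 1) * Real.exp (-β * ρ (x, y)) = Real.exp (-1) := by
      rw [← Real.exp_add]; ring_nf
    have h4 : β * ρ (x, y) * Real.exp (-β * ρ (x, y)) ≤ Real.exp (-1) := by
      nlinarith [Real.exp_pos (-β * ρ (x, y))]
    have h5 : Real.exp (-1) ≤ 1 := Real.exp_le_one_iff.mpr (by norm_num)
    rw [le_div_iff₀ hβ]
    nlinarith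
  have hZpos : 0 < Z := by
    rw [hZdef, integral_pos_iff_support_of_nonneg (fun y => (Real.exp_pos _).le) hint1]
    have : (Function.support fun y => Real.exp (-β * ρ (x, y))) = Set.univ := by
      ext y; simp [Function.support, (Real.exp_pos _).ne']
    rw [this]
    simp
  have hZle1 : Z ≤ 1 := by
    rw [hZdef]
    calc ∫ y, Real.exp (-β * ρ (x, y)) ∂q ≤ ∫ _, (1:ℝ) ∂q := by
          refine integral_mono hint1 (integrable_const 1) fun y => ?_
          exact Real.exp_le_one_iff.mpr (by nlinarith [hρ0 (x, y)])
      _ = 1 := by simp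
  have hA0 : 0 ≤ A := by
    have : Real.log Z ≤ 0 := Real.log_nonpos hZpos.le hZle1
    rw [hAdef]
    have hβ' : 0 ≤ 1 / β := by positivity
    nlinarith
  have hexpA : Real.exp (-β * A) = Z := by
    rw [hAdef, show -β * (-(1 / β) * Real.log Z) = Real.log Z by field_simp]
    exact Real.exp_log hZpos
  have part1 : (∫ y, Real.exp (-β * ρ (x, y)) * ρ (x, y) ∂q)
      ≤ A * Real.exp (-β * A) + Real.exp (-β * M) * M := by
    have hintR : Integrable (fun y => A * Real.exp (-β * ρ (x, y)) + Real.exp (-β * M) * M) q :=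
      (hint1.const_mul A).add (integrable_const _)
    calc (∫ y, Real.exp (-β * ρ (x, y)) * ρ (x, y) ∂q)
        ≤ ∫ y, (A * Real.exp (-β * ρ (x, y)) + Real.exp (-β * M) * M) ∂q := by
          refine integral_mono hint2 hintR fun y => ?_
          exact tilted_pointwise_bound β A (ρ (x, y)) hβ hA0 (hρ0 (x, y))
      _ = A * Z + Real.exp (-β * M) * M := by
          rw [integral_add (hint1.const_mul A) (integrable_const _),
            integral_const_mul, integral_const]
          simp [hZdef]
      _ = A * Real.exp (-β * A) + Real.exp (-β * M) * M := by rw [hexpA]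
  refine ⟨part1, ?_⟩
  rw [div_le_iff₀ hZpos]
  have hMA : A ≤ M := le_max_left _ _
  have hexpMA : Real.exp (-β * M) ≤ Real.exp (-β * A) := by
    apply Real.exp_le_exp.mpr; nlinarith
  have hM0 : 0 ≤ M := le_trans hA0 hMA
  have hMle : M ≤ A + 1 / β := by
    have hb : (0:ℝ) < 1 / β := by positivity
    rcases max_cases A (1/β) with ⟨h3, _⟩ | ⟨h3, _⟩ <;> rw [hMdef, h3] <;> nlinarith
  rw [hexpA] at part1
  nlinarith [mul_le_mul_of_nonneg_right hexpMA hM0]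
end
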